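/- Let n ≥ 3 and let S = {p₁, …, p_m} be a finite subset of ℝⁿ. Let u be a real-valued harmonic function on ℝⁿ ∖ S. Suppose there exist s₀ > 0, a constant C > 0 and an exponent μ ∈ (0, n−2) such that |u(x)| ≤ C·|x − pᵢ|^{−μ} for every i and every x with 0 < |x − pᵢ| < s₀, and suppose moreover that u(x) → 0 as the distance from x to S tends to infinity. Then u is identically zero on ℝⁿ ∖ S. -/

import Mathlib

/-!
Suppose `u(x₀) > 0` at some regular point. With `μ < ν < n - 2`, the barrier
`v = ∑ᵢ |x - pᵢ|^(-ν)` is positive and strictly superharmonic off the singular set, so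
`w = u - δ v` is strictly subharmonic there and, for small `δ`, still positive at `x₀`.
Near each `pᵢ` the barrier dominates the bound `C |x - pᵢ|^(-μ)`, so `w < 0`; far away `w ≤ u`
is small. Hence the maximum of `w` on a large ball with small balls around the `pᵢ` removed is
attained at an interior point, where the Laplacian of `w` would have to be `≤ 0`. So `u ≤ 0`,
and applying this to `-u` gives `u = 0`.
-/

def IsHarmonicOnEuc {n : ℕ} (u : EuclideanSpace ℝ (Fin n) → ℝ)
    (s : Set (EuclideanSpace ℝ (Fin n))) : Prop :=
  ContDiffOn ℝ 2 u s ∧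
    ∀ x ∈ s, ∑ i : Fin n, iteratedFDerivWithin ℝ 2 u s x
      ![EuclideanSpace.single i 1, EuclideanSpace.single i 1] = 0

open Filter Topology Set Metric InnerProductSpace Laplacian RealInnerProductSpace

theorem deriv_deriv_nonpos_of_isLocalMax {g : ℝ → ℝ} {t : ℝ} (h : IsLocalMax g t)
    (hc : ContinuousAt g t) : deriv (deriv g) t ≤ 0 := by
  by_contra! hpos
  -- the second derivative test makes `t` also a local minimum, so `g` is locally constant
  have hmin := isLocalMin_of_deriv_deriv_pos hpos h.deriv_eq_zero hc
  have hconst : g =ᶠ[𝓝 t] fun _ => g t := (hmin.and h).mono fun s hs => le_antisymm hs.2 hs.1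
  have hderiv : deriv g =ᶠ[𝓝 t] fun _ => 0 :=
    hconst.eventuallyEq_nhds.mono fun s hs => by rw [hs.deriv_eq, deriv_const]
  simp [hderiv.deriv_eq] at hpos

theorem Real.sq_rpow_div_two {x : ℝ} (hx : 0 ≤ x) (a : ℝ) : (x ^ 2) ^ (a / 2) = x ^ a := by
  rw [← Real.rpow_natCast, ← Real.rpow_mul hx]
  ring_nf

theorem deriv_deriv_quadratic_rpow {s : ℝ} (hs : 0 < s) (b c : ℝ) :
    deriv (deriv fun t : ℝ => (s + 2 * b * t + t ^ 2) ^ c) 0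
      = 4 * b ^ 2 * c * (c - 1) * s ^ (c - 2) + 2 * c * s ^ (c - 1) := by
  set Q : ℝ → ℝ := fun t => s + 2 * b * t + t ^ 2
  have hQ : ∀ t, HasDerivAt Q (2 * b + 2 * t) t := fun t => by
    simpa using (((hasDerivAt_id' t).const_mul (2 * b)).const_add s).fun_add (hasDerivAt_pow 2 t)
  have hQ0 : Q 0 = s := by simp [Q]
  have hQne : ∀ᶠ t in 𝓝 0, Q t ≠ 0 := (hQ 0).continuousAt.eventually_ne (hQ0 ▸ hs.ne')
  have hderiv : deriv (fun t => Q t ^ c) =ᶠ[𝓝 0] fun t => (2 * b + 2 * t) * c * Q t ^ (c - 1) := by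
    filter_upwards [hQne] with t ht
    exact ((hQ t).rpow_const (Or.inl ht)).deriv
  have hpow : HasDerivAt (fun t => Q t ^ (c - 1)) (2 * b * (c - 1) * s ^ (c - 2)) 0 := by
    convert (hQ 0).rpow_const (p := c - 1) (Or.inl (hQ0 ▸ hs.ne')) using 1
    rw [hQ0]; ring_nf
  have hlin : HasDerivAt (fun t : ℝ => (2 * b + 2 * t) * c) (2 * c) 0 := by
    simpa using (((hasDerivAt_id (0 : ℝ)).const_mul 2).const_add (2 * b)).mul_const c
  rw [hderiv.deriv_eq, (hlin.fun_mul hpow).deriv, hQ0, show s ^ (c - 1) = s ^ (c - 2) * s by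
    rw [← Real.rpow_add_one hs.ne']; ring_nf]
  ring

theorem ContDiffAt.iteratedFDeriv_two_apply_self {E F : Type*} [NormedAddCommGroup E]
    [NormedSpace ℝ E] [NormedAddCommGroup F] [NormedSpace ℝ F] {f : E → F} {x : E}
    (hf : ContDiffAt ℝ 2 f x) (v : E) :
    iteratedFDeriv ℝ 2 f x ![v, v] = deriv (deriv fun t : ℝ => f (x + t • v)) 0 := by
  have hline : ∀ t : ℝ, HasDerivAt (fun s : ℝ => x + s • v) v t := fun t => by
    simpa using ((hasDerivAt_id t).smul_const v).const_add x
  have hline0 : Tendsto (fun t : ℝ => x + t • v) (𝓝 0) (𝓝 x) := by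
    simpa using (hline 0).continuousAt.tendsto
  have hderiv : deriv (fun t : ℝ => f (x + t • v)) =ᶠ[𝓝 0] fun t => fderiv ℝ f (x + t • v) v := by
    filter_upwards [hline0.eventually (hf.eventually (by simp))] with t ht
    exact ((ht.differentiableAt two_ne_zero).hasFDerivAt.comp_hasDerivAt t (hline t)).deriv
  have hfderiv : HasFDerivAt (fderiv ℝ f) (fderiv ℝ (fderiv ℝ f) x) (x + (0 : ℝ) • v) := by
    simpa using ((hf.fderiv_right (m := 1) (by norm_num)).differentiableAt one_ne_zero).hasFDerivAt
  have h1 : HasDerivAt (fun t : ℝ => fderiv ℝ f (x + t • v)) (fderiv ℝ (fderiv ℝ f) x v) 0 :=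
    hfderiv.comp_hasDerivAt 0 (hline 0)
  have h2 : HasDerivAt (fun t : ℝ => fderiv ℝ f (x + t • v) v) (fderiv ℝ (fderiv ℝ f) x v v) 0 := by
    simpa using h1.clm_apply (hasDerivAt_const 0 v)
  rw [hderiv.deriv_eq, h2.deriv, iteratedFDeriv_two_apply]
  rfl

section Barrier

variable {E ι : Type*} [NormedAddCommGroup E] [Fintype ι]

noncomputable def radialBarrier (p : ι → E) (ν : ℝ) (z : E) : ℝ := ∑ i, ‖z - p i‖ ^ (-ν)

theorem rpow_dist_le_radialBarrier (p : ι → E) (ν : ℝ) (z : E) (i : ι) :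
    dist z (p i) ^ (-ν) ≤ radialBarrier p ν z := by
  rw [dist_eq_norm]
  exact Finset.single_le_sum (f := fun i => ‖z - p i‖ ^ (-ν))
    (fun j _ => Real.rpow_nonneg (norm_nonneg _) _) (Finset.mem_univ i)

theorem radialBarrier_nonneg (p : ι → E) (ν : ℝ) (z : E) : 0 ≤ radialBarrier p ν z :=
  Finset.sum_nonneg fun _ _ => Real.rpow_nonneg (norm_nonneg _) _

end Barrier

theorem le_dist_of_add_sum_dist_le {X ι : Type*} [PseudoMetricSpace X] [Fintype ι] {p : ι → X}
    {x x₀ : X} {R : ℝ} (h : R + ∑ i, dist x₀ (p i) ≤ dist x x₀) (i : ι) : R ≤ dist x (p i) := by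
  have := Finset.single_le_sum (f := fun i => dist x₀ (p i)) (fun j _ => dist_nonneg)
    (Finset.mem_univ i)
  linarith [dist_triangle_right x x₀ (p i)]

section Laplacian

variable {E : Type*} [NormedAddCommGroup E] [InnerProductSpace ℝ E]

theorem contDiffAt_norm_sub_rpow {n : WithTop ℕ∞} {x q : E} (hx : x ≠ q) (a : ℝ) :
    ContDiffAt ℝ n (fun z => ‖z - q‖ ^ a) x :=
  (Real.contDiffAt_rpow_const_of_ne (norm_pos_iff.2 (sub_ne_zero.2 hx)).ne').comp x
    ((contDiffAt_norm ℝ (sub_ne_zero.2 hx)).comp x (contDiffAt_id.sub contDiffAt_const))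

theorem contDiffOn_radialBarrier {ι : Type*} [Fintype ι] {n : WithTop ℕ∞} (p : ι → E) (ν : ℝ) :
    ContDiffOn ℝ n (radialBarrier p ν) (range p)ᶜ := fun _ hx =>
  (ContDiffAt.sum fun i _ =>
    contDiffAt_norm_sub_rpow (fun h => hx ⟨i, h.symm⟩) _).contDiffWithinAt

variable [FiniteDimensional ℝ E]

theorem IsLocalMax.laplacian_nonpos {f : E → ℝ} {x : E} (h : IsLocalMax f x)
    (hf : ContDiffAt ℝ 2 f x) : Δ f x ≤ 0 := by
  rw [laplacian_eq_iteratedFDeriv_stdOrthonormalBasis]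
  refine Finset.sum_nonpos fun i _ => ?_
  have hline : Continuous fun t : ℝ => x + t • stdOrthonormalBasis ℝ E i := by fun_prop
  have hline0 : Tendsto (fun t : ℝ => x + t • stdOrthonormalBasis ℝ E i) (𝓝 0) (𝓝 x) :=
    hline.tendsto' 0 x (by simp)
  rw [hf.iteratedFDeriv_two_apply_self]
  exact deriv_deriv_nonpos_of_isLocalMax
    (by simpa [IsLocalMax, IsMaxFilter] using hline0.eventually h)
    (hf.continuousAt.comp_of_eq hline.continuousAt (by simp))

theorem laplacian_sum {F ι : Type*} [NormedAddCommGroup F] [NormedSpace ℝ F] (s : Finset ι)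
    {f : ι → E → F} {x : E} (hf : ∀ i ∈ s, ContDiffAt ℝ 2 (f i) x) :
    Δ (fun y => ∑ i ∈ s, f i y) x = ∑ i ∈ s, Δ (f i) x := by
  classical
  induction s using Finset.induction_on with
  | empty => simp
  | insert a s ha ih =>
    simp only [Finset.sum_insert ha]
    rw [← ih fun i hi => hf i (Finset.mem_insert_of_mem hi)]
    exact (hf a (Finset.mem_insert_self a s)).laplacian_add
      (ContDiffAt.sum fun i hi => hf i (Finset.mem_insert_of_mem hi))

theorem laplacian_norm_sub_rpow {x q : E} (hx : x ≠ q) (a : ℝ) :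
    Δ (fun z => ‖z - q‖ ^ a) x = a * (a + Module.finrank ℝ E - 2) * ‖x - q‖ ^ (a - 2) := by
  set e := stdOrthonormalBasis ℝ E
  have hs : 0 < ‖x - q‖ ^ 2 := by positivity [sub_ne_zero.2 hx]
  have hline : ∀ i t, ‖x + t • e i - q‖ ^ a
      = (‖x - q‖ ^ 2 + 2 * ⟪x - q, e i⟫ * t + t ^ 2) ^ (a / 2) := fun i t => by
    rw [← Real.sq_rpow_div_two (norm_nonneg _), show x + t • e i - q = (x - q) + t • e i by abel,
      norm_add_sq_real, inner_smul_right, norm_smul, e.orthonormal.1 i]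
    ring_nf; simp
  have hterm : ∀ i, iteratedFDeriv ℝ 2 (fun z => ‖z - q‖ ^ a) x ![e i, e i]
      = 4 * ⟪x - q, e i⟫ ^ 2 * (a / 2) * (a / 2 - 1) * (‖x - q‖ ^ 2) ^ (a / 2 - 2)
        + 2 * (a / 2) * (‖x - q‖ ^ 2) ^ (a / 2 - 1) := fun i => by
    rw [(contDiffAt_norm_sub_rpow hx a).iteratedFDeriv_two_apply_self, funext (hline i),
      deriv_deriv_quadratic_rpow hs]
  rw [laplacian_eq_iteratedFDeriv_orthonormalBasis _ e]
  simp only [hterm, Finset.sum_add_distrib, ← Finset.sum_mul, ← Finset.mul_sum,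
    e.sum_sq_inner_left, Finset.sum_const, Finset.card_univ, Fintype.card_fin, nsmul_eq_mul]
  rw [← Real.sq_rpow_div_two (norm_nonneg _) (a - 2), show (a - 2) / 2 = a / 2 - 2 + 1 by ring,
    show a / 2 - 1 = a / 2 - 2 + 1 by ring, Real.rpow_add_one hs.ne']
  ring

theorem IsCompact.exists_isMaxOn_mem_diff_of_laplacian_pos {K U : Set E} {w : E → ℝ}
    (hK : IsCompact K) (hKne : K.Nonempty) (hU : IsOpen U) (hUK : U ⊆ K) (hw : ContinuousOn w K)
    (hΔw : ∀ x ∈ U, ContDiffAt ℝ 2 w x ∧ 0 < Δ w x) : ∃ y ∈ K \ U, IsMaxOn w K y := by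
  obtain ⟨y, hyK, hymax⟩ := hK.exists_isMaxOn hKne hw
  refine ⟨y, ⟨hyK, fun hyU => ?_⟩, hymax⟩
  have hloc : IsLocalMax w y := mem_of_superset (hU.mem_nhds hyU) fun z hz => hymax (hUK hz)
  exact (hloc.laplacian_nonpos (hΔw y hyU).1).not_gt (hΔw y hyU).2

theorem exists_ge_near_or_far_of_laplacian_pos {ι : Type*} [Finite ι] {p : ι → E} {w : E → ℝ}
    (hw : ContDiffOn ℝ 2 w (range p)ᶜ) (hΔw : ∀ x ∉ range p, 0 < Δ w x) {x₀ : E}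
    (hx₀ : x₀ ∉ range p) {r : ℝ} (hr : 0 < r) (R : ℝ) :
    ∃ x ∉ range p, w x₀ ≤ w x ∧ ((∃ i, dist x (p i) ≤ r) ∨ R ≤ dist x x₀) := by
  by_contra! hcon
  have hS : IsOpen (range p)ᶜ := (finite_range p).isClosed.isOpen_compl
  set K := closedBall x₀ R ∩ ⋂ i, (ball (p i) r)ᶜ
  set U := ball x₀ R ∩ ⋂ i, (closedBall (p i) r)ᶜ
  have hKS : K ⊆ (range p)ᶜ := by
    rintro x ⟨-, hx⟩ ⟨i, rfl⟩
    exact mem_iInter.1 hx i (mem_ball_self hr)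
  have hx₀K : x₀ ∈ K := by
    obtain ⟨hnear, hfar⟩ := hcon x₀ hx₀ le_rfl
    exact ⟨mem_closedBall.2 hfar.le, mem_iInter.2 fun i => by simpa using (hnear i).le⟩
  have hUK : U ⊆ K := inter_subset_inter ball_subset_closedBall
    (iInter_mono fun i => compl_subset_compl.2 ball_subset_closedBall)
  have hK : IsCompact K := (isCompact_closedBall x₀ R).inter_right
    (isClosed_iInter fun i => isOpen_ball.isClosed_compl)
  have hU : IsOpen U :=
    isOpen_ball.inter (isOpen_iInter_of_finite fun i => isClosed_closedBall.isOpen_compl)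
  obtain ⟨y, ⟨hyK, hyU⟩, hymax⟩ := hK.exists_isMaxOn_mem_diff_of_laplacian_pos ⟨x₀, hx₀K⟩ hU hUK
    (hw.continuousOn.mono hKS)
    fun x hx => ⟨hw.contDiffAt (hS.mem_nhds (hKS (hUK hx))), hΔw x (hKS (hUK hx))⟩
  obtain ⟨hnear, hfar⟩ := hcon y (hKS hyK) (hymax hx₀K)
  exact hyU ⟨mem_ball.2 hfar, mem_iInter.2 fun i => by simpa using hnear i⟩

theorem laplacian_radialBarrier_neg {ι : Type*} [Fintype ι] [Nonempty ι] {p : ι → E} {x : E}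
    (hx : x ∉ range p) {ν : ℝ} (hν : 0 < ν) (hνd : ν < Module.finrank ℝ E - 2) :
    Δ (radialBarrier p ν) x < 0 := by
  have hxp : ∀ i, x ≠ p i := fun i h => hx ⟨i, h.symm⟩
  unfold radialBarrier
  rw [laplacian_sum _ fun i _ => contDiffAt_norm_sub_rpow (hxp i) _]
  refine Finset.sum_neg (fun i _ => ?_) Finset.univ_nonempty
  rw [laplacian_norm_sub_rpow (hxp i)]
  exact mul_neg_of_neg_of_pos (mul_neg_of_neg_of_pos (by linarith) (by linarith))
    (Real.rpow_pos_of_pos (norm_pos_iff.2 (sub_ne_zero.2 (hxp i))) _)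

theorem eventually_mul_rpow_neg_lt (C : ℝ) {δ μ ν : ℝ} (hδ : 0 < δ) (hμν : μ < ν) :
    ∀ᶠ ρ in 𝓝[>] 0, C * ρ ^ (-μ) < δ * ρ ^ (-ν) := by
  have hlim : Tendsto (fun ρ : ℝ => C * ρ ^ (ν - μ)) (𝓝[>] 0) (𝓝 0) := by
    simpa [Real.zero_rpow (sub_pos.2 hμν).ne'] using
      ((Real.continuous_rpow_const (sub_pos.2 hμν).le).const_mul C).continuousAt.tendsto.mono_left
        (nhdsWithin_le_nhds (a := (0 : ℝ)))
  filter_upwards [hlim.eventually (gt_mem_nhds hδ), self_mem_nhdsWithin] with ρ hρ (hρ0 : 0 < ρ)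
  calc C * ρ ^ (-μ) = C * ρ ^ (ν - μ) * ρ ^ (-ν) := by
        rw [mul_assoc, ← Real.rpow_add hρ0]; ring_nf
    _ < δ * ρ ^ (-ν) := mul_lt_mul_of_pos_right hρ (Real.rpow_pos_of_pos hρ0 _)

theorem le_zero_of_laplacian_nonneg_off_range {ι : Type*} [Fintype ι] {p : ι → E} {u : E → ℝ}
    (hu : ContDiffOn ℝ 2 u (range p)ᶜ) (hΔu : ∀ x ∉ range p, 0 ≤ Δ u x) {s₀ C μ : ℝ}
    (hs₀ : 0 < s₀) (hμ : μ ∈ Ioo 0 ((Module.finrank ℝ E : ℝ) - 2))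
    (hbound : ∀ i, ∀ x ∉ range p, dist x (p i) < s₀ → u x ≤ C * dist x (p i) ^ (-μ))
    (hdecay : ∀ ε > 0, ∃ R, ∀ x ∉ range p, (∀ i, R ≤ dist x (p i)) → u x ≤ ε) :
    ∀ x ∉ range p, u x ≤ 0 := by
  intro x₀ hx₀
  by_contra! hpos
  obtain ⟨R₀, hR₀⟩ := hdecay (u x₀ / 2) (by positivity)
  cases isEmpty_or_nonempty ι
  · linarith [hR₀ x₀ hx₀ isEmptyElim]
  have hS : IsOpen (range p)ᶜ := (finite_range p).isClosed.isOpen_compl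
  obtain ⟨ν, hμν, hνd⟩ := exists_between hμ.2
  set v := radialBarrier p ν
  have hv := contDiffOn_radialBarrier (n := 2) p ν
  obtain ⟨δ, hδ, hδv⟩ : ∃ δ > 0, δ * v x₀ < u x₀ / 2 := by
    refine ⟨u x₀ / 2 / (v x₀ + 1), by positivity [radialBarrier_nonneg p ν x₀], ?_⟩
    rw [div_mul_eq_mul_div, div_lt_iff₀ (by linarith [radialBarrier_nonneg p ν x₀])]
    nlinarith
  set w := u - δ • v
  have hw : ∀ x, w x = u x - δ * v x := fun x => rfl
  have hΔw : ∀ x ∉ range p, 0 < Δ w x := fun x hx => by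
    have hux := hu.contDiffAt (hS.mem_nhds hx)
    have hvx := hv.contDiffAt (hS.mem_nhds hx)
    rw [hux.laplacian_sub (show ContDiffAt ℝ 2 (δ • v) x from hvx.const_smul δ),
      laplacian_smul δ hvx, smul_eq_mul]
    nlinarith [hΔu x hx, laplacian_radialBarrier_neg hx (hμ.1.trans hμν) hνd]
  obtain ⟨r, hr, hr_sub⟩ := mem_nhdsGT_iff_exists_Ioc_subset.1
    ((eventually_mul_rpow_neg_lt C hδ hμν).and (Ioo_mem_nhdsGT hs₀))
  have hnear : ∀ x ∉ range p, ∀ i, dist x (p i) ≤ r → w x < 0 := fun x hx i hxi => by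
    obtain ⟨hCδ, -, hs₀'⟩ := hr_sub ⟨dist_pos.2 fun h => hx ⟨i, h.symm⟩, hxi⟩
    linarith [hbound i x hx hs₀', hw x,
      mul_le_mul_of_nonneg_left (rpow_dist_le_radialBarrier p ν x i) hδ.le]
  have hfar : ∀ x ∉ range p, R₀ + ∑ i, dist x₀ (p i) ≤ dist x x₀ → w x < w x₀ := fun x hx hR =>
    by linarith [hR₀ x hx (le_dist_of_add_sum_dist_le hR), hw x, hw x₀,
      mul_nonneg hδ.le (radialBarrier_nonneg p ν x)]
  obtain ⟨y, hy, hwy, ⟨i, hyi⟩ | hyR⟩ :=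
    exists_ge_near_or_far_of_laplacian_pos (w := w) (hu.sub (hv.const_smul δ)) hΔw hx₀ hr
      (R₀ + ∑ i, dist x₀ (p i))
  · linarith [hnear y hy i hyi, hw x₀]
  · linarith [hfar y hy hyR]

end Laplacian

theorem IsHarmonicOnEuc.harmonicOnNhd {n : ℕ} {u : EuclideanSpace ℝ (Fin n) → ℝ}
    {s : Set (EuclideanSpace ℝ (Fin n))} (hs : IsOpen s) (hu : IsHarmonicOnEuc u s) :
    HarmonicOnNhd u s := fun x hx =>
  ⟨hu.1.contDiffAt (hs.mem_nhds hx), eventually_of_mem (hs.mem_nhds hx) fun y hy => by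
    rw [laplacian_eq_iteratedFDeriv_orthonormalBasis u (EuclideanSpace.basisFun (Fin n) ℝ)]
    simpa [← iteratedFDerivWithin_of_isOpen 2 hs hy] using hu.2 y hy⟩

theorem stmt_8_general (n : ℕ) (m : ℕ) (p : Fin m → EuclideanSpace ℝ (Fin n))
    (u : EuclideanSpace ℝ (Fin n) → ℝ)
    (hu : IsHarmonicOnEuc u (Set.range p)ᶜ)
    (s₀ : ℝ) (hs₀ : 0 < s₀) (C : ℝ)
    (μ : ℝ) (hμ : μ ∈ Set.Ioo (0 : ℝ) ((n : ℝ) - 2))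
    (hbound : ∀ i : Fin m, ∀ x, x ∉ Set.range p → dist x (p i) < s₀ →
      |u x| ≤ C * (dist x (p i)) ^ (-μ))
    (hdecay : ∀ ε : ℝ, 0 < ε → ∃ R : ℝ, ∀ x, x ∉ Set.range p →
      (∀ i : Fin m, R ≤ dist x (p i)) → |u x| ≤ ε) :
    ∀ x, x ∉ Set.range p → u x = 0 := by
  have hharm := hu.harmonicOnNhd (finite_range p).isClosed.isOpen_compl
  have hμ' : μ ∈ Ioo 0 ((Module.finrank ℝ (EuclideanSpace ℝ (Fin n)) : ℝ) - 2) := by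
    rwa [finrank_euclideanSpace_fin]
  have hnonpos : ∀ f, HarmonicOnNhd f (range p)ᶜ → (∀ x, |f x| = |u x|) →
      ∀ x ∉ range p, f x ≤ 0 := fun f hf habs =>
    le_zero_of_laplacian_nonneg_off_range hf.contDiffOn (fun x hx => (hf x hx).2.self_of_nhds.ge)
      hs₀ hμ' (fun i x hx hxi => (le_abs_self _).trans ((habs x).trans_le (hbound i x hx hxi)))
      fun ε hε => (hdecay ε hε).imp fun R hR x hx hxR =>
        (le_abs_self _).trans ((habs x).trans_le (hR x hx hxR))
  intro x hx
  exact le_antisymm (hnonpos u hharm (fun _ => rfl) x hx)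
    (neg_nonpos.1 (hnonpos (-u) hharm.neg (fun _ => abs_neg _) x hx))

/-- **Liouville with finitely many singular points.** Let n ≥ 3 and
S = {p₁,…,p_m} ⊂ ℝⁿ finite. If u is harmonic on ℝⁿ ∖ S, satisfies near each pᵢ the bound
|u(x)| ≤ C·|x − pᵢ|^{−μ} with 0 < μ < n − 2, and u(x) → 0 as the distance from x to S
tends to infinity, then u ≡ 0 on ℝⁿ ∖ S. -/
theorem stmt_8 (n : ℕ) (hn : 3 ≤ n) (m : ℕ) (p : Fin m → EuclideanSpace ℝ (Fin n))
    (u : EuclideanSpace ℝ (Fin n) → ℝ)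
    (hu : IsHarmonicOnEuc u (Set.range p)ᶜ)
    (s₀ : ℝ) (hs₀ : 0 < s₀) (C : ℝ) (hC : 0 < C)
    (μ : ℝ) (hμ : μ ∈ Set.Ioo (0 : ℝ) ((n : ℝ) - 2))
    (hbound : ∀ i : Fin m, ∀ x, x ∉ Set.range p → dist x (p i) < s₀ →
      |u x| ≤ C * (dist x (p i)) ^ (-μ))
    (hdecay : ∀ ε : ℝ, 0 < ε → ∃ R : ℝ, ∀ x, x ∉ Set.range p →
      (∀ i : Fin m, R ≤ dist x (p i)) → |u x| ≤ ε) :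
    ∀ x, x ∉ Set.range p → u x = 0 :=
  stmt_8_general n m p u hu s₀ hs₀ C μ hμ hbound hdecay
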